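/- arXiv:2605.27137 — 3 statements merged into one kernel-verified Lean document; each statement's English description precedes it below -/
import Mathlib

section
/- Let P₁,…,Pₙ and Q₁,…,Qₙ be probability measures with densities f_i, g_i with respect to a common dominating measure, and fix α ∈ (0,1). Then ∏_{i=1}^n ∫ f_i^α g_i^{1-α} dν ≤ exp(−m_α ∑_{i=1}^n h²(f_i,g_i)), where m_α = min(α, 1−α) and h²(f,g) = ∫(√f−√g)² dν is the squared Hellinger distance. -/
/-!
Write `ρ = ∫ √f √g` for the Hellinger affinity. For `0 ≤ b ≤ 1/2` the factorisation
`f^b g^(1-b) = (√f √g)^(2b) g^(1-2b)` and Hölder's inequality with the weights `2b`, `1 - 2b`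
give `∫ f^b g^(1-b) ≤ ρ^(2b)` for probability densities; for `b ≥ 1/2` swap `f` and `g`.
Expanding the square, `h² = 2 - 2ρ`, so `1 + x ≤ eˣ` turns `ρ^(2m)` into
`exp (2m (ρ - 1)) = exp (-m h²)`. Multiplying these bounds over `i` gives the claim.
-/

open MeasureTheory

namespace Real

theorem rpow_le_exp_mul_sub_one {x t : ℝ} (hx : 0 ≤ x) (ht : 0 ≤ t) :
    x ^ t ≤ exp (t * (x - 1)) :=
  calc x ^ t ≤ exp (x - 1) ^ t := by
        gcongr
        linarith [add_one_le_exp (x - 1)]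
    _ = exp (t * (x - 1)) := by rw [← exp_mul, mul_comm]

end Real

section HellingerAffinity

variable {α : Type*} [MeasurableSpace α] {ν : Measure α}

theorem integral_rpow_mul_rpow_le {F G : α → ℝ} (hF0 : ∀ x, 0 ≤ F x) (hG0 : ∀ x, 0 ≤ G x)
    (hF : Integrable F ν) (hG : Integrable G ν) {p q : ℝ} (hp : 0 ≤ p) (hq : 0 ≤ q)
    (hpq : p + q = 1) :
    ∫ x, F x ^ p * G x ^ q ∂ν ≤ (∫ x, F x ∂ν) ^ p * (∫ x, G x ∂ν) ^ q := by
  have hofReal : ∀ {H : α → ℝ}, (∀ x, 0 ≤ H x) → Integrable H ν →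
      ∫⁻ x, ENNReal.ofReal (H x) ∂ν = ENNReal.ofReal (∫ x, H x ∂ν) := fun hH0 hH =>
    (ofReal_integral_eq_lintegral_ofReal hH (.of_forall hH0)).symm
  have hlint : ∫⁻ x, ENNReal.ofReal (F x ^ p * G x ^ q) ∂ν
      ≤ ENNReal.ofReal ((∫ x, F x ∂ν) ^ p * (∫ x, G x ∂ν) ^ q) := by
    simp_rw [ENNReal.ofReal_mul (Real.rpow_nonneg (hF0 _) _),
      ← ENNReal.ofReal_rpow_of_nonneg (hF0 _) hp, ← ENNReal.ofReal_rpow_of_nonneg (hG0 _) hq,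
      ENNReal.ofReal_mul (Real.rpow_nonneg (integral_nonneg hF0) _),
      ← ENNReal.ofReal_rpow_of_nonneg (integral_nonneg hF0) hp,
      ← ENNReal.ofReal_rpow_of_nonneg (integral_nonneg hG0) hq, ← hofReal hF0 hF,
      ← hofReal hG0 hG]
    exact ENNReal.lintegral_mul_norm_pow_le hF.aemeasurable.ennreal_ofReal
      hG.aemeasurable.ennreal_ofReal hp hq hpq
  rw [integral_eq_lintegral_of_nonneg_ae (.of_forall fun x =>
    mul_nonneg (Real.rpow_nonneg (hF0 x) p) (Real.rpow_nonneg (hG0 x) q))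
    ((hF.aemeasurable.pow_const p).fun_mul (hG.aemeasurable.pow_const q)).aestronglyMeasurable]
  exact ENNReal.toReal_le_of_le_ofReal (mul_nonneg (Real.rpow_nonneg (integral_nonneg hF0) p)
    (Real.rpow_nonneg (integral_nonneg hG0) q)) hlint

theorem integrable_sqrt_mul_sqrt {f g : α → ℝ} (hf : Integrable f ν) (hg : Integrable g ν) :
    Integrable (fun x => √(f x) * √(g x)) ν := by
  refine (hf.abs.add hg.abs).mono' ?_ (.of_forall fun x => ?_)
  · exact (Real.continuous_sqrt.comp_aestronglyMeasurable hf.aestronglyMeasurable).mul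
      (Real.continuous_sqrt.comp_aestronglyMeasurable hg.aestronglyMeasurable)
  · rw [Pi.add_apply, Real.norm_of_nonneg (by positivity)]
    nlinarith [sq_nonneg (√(f x) - √(g x)), Real.sq_sqrt' (x := f x), Real.sq_sqrt' (x := g x),
      max_le (le_abs_self (f x)) (abs_nonneg (f x)), max_le (le_abs_self (g x)) (abs_nonneg (g x))]

variable (ν) in
noncomputable def hellingerAffinity (f g : α → ℝ) : ℝ := ∫ x, √(f x) * √(g x) ∂ν

theorem hellingerAffinity_comm (f g : α → ℝ) :
    hellingerAffinity ν f g = hellingerAffinity ν g f := by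
  simp only [hellingerAffinity, mul_comm]

theorem integral_sqrt_sub_sqrt_sq {f g : α → ℝ} (hf0 : ∀ x, 0 ≤ f x) (hg0 : ∀ x, 0 ≤ g x)
    (hf : Integrable f ν) (hg : Integrable g ν) :
    ∫ x, (√(f x) - √(g x)) ^ 2 ∂ν
      = ∫ x, f x ∂ν + ∫ x, g x ∂ν - 2 * hellingerAffinity ν f g := by
  have hexpand : ∀ x, (√(f x) - √(g x)) ^ 2 = f x + g x - 2 * (√(f x) * √(g x)) := fun x => by
    rw [sub_sq, Real.sq_sqrt (hf0 x), Real.sq_sqrt (hg0 x)]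
    ring
  simp_rw [hexpand]
  rw [integral_sub (f := fun x => f x + g x) (hf.add hg)
    ((integrable_sqrt_mul_sqrt hf hg).const_mul 2), integral_add hf hg, integral_const_mul,
    hellingerAffinity]

theorem integral_rpow_mul_rpow_le_hellingerAffinity_rpow {f g : α → ℝ}
    (hf0 : ∀ x, 0 ≤ f x) (hg0 : ∀ x, 0 ≤ g x) (hf : Integrable f ν) (hg : Integrable g ν)
    {b : ℝ} (hb0 : 0 ≤ b) (hb : b ≤ 1 / 2) :
    ∫ x, f x ^ b * g x ^ (1 - b) ∂ν
      ≤ hellingerAffinity ν f g ^ (2 * b) * (∫ x, g x ∂ν) ^ (1 - 2 * b) := by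
  have hsplit : ∀ x,
      f x ^ b * g x ^ (1 - b) = (√(f x) * √(g x)) ^ (2 * b) * g x ^ (1 - 2 * b) := fun x => by
    rw [← Real.sqrt_mul (hf0 x), Real.sqrt_eq_rpow, ← Real.rpow_mul (mul_nonneg (hf0 x) (hg0 x)),
      show 1 / 2 * (2 * b) = b by ring, Real.mul_rpow (hf0 x) (hg0 x), mul_assoc,
      ← Real.rpow_add_of_nonneg (hg0 x) hb0 (by linarith)]
    ring_nf
  simp_rw [hsplit]
  exact integral_rpow_mul_rpow_le (fun x => by positivity) hg0 (integrable_sqrt_mul_sqrt hf hg) hg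
    (by linarith) (by linarith) (by ring)

theorem integral_rpow_mul_one_sub_rpow_le_hellingerAffinity_rpow_min {f g : α → ℝ}
    (hf0 : ∀ x, 0 ≤ f x) (hg0 : ∀ x, 0 ≤ g x) (hf : Integrable f ν) (hg : Integrable g ν)
    (hf1 : ∫ x, f x ∂ν = 1) (hg1 : ∫ x, g x ∂ν = 1) {a : ℝ} (ha0 : 0 ≤ a) (ha1 : a ≤ 1) :
    ∫ x, f x ^ a * g x ^ (1 - a) ∂ν ≤ hellingerAffinity ν f g ^ (2 * min a (1 - a)) := by
  rcases le_total a (1 - a) with ha | ha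
  · have h := integral_rpow_mul_rpow_le_hellingerAffinity_rpow hf0 hg0 hf hg ha0 (by linarith)
    rw [hg1, Real.one_rpow, mul_one] at h
    rwa [min_eq_left ha]
  · have h := integral_rpow_mul_rpow_le_hellingerAffinity_rpow hg0 hf0 hg hf (b := 1 - a)
      (by linarith) (by linarith)
    rw [sub_sub_cancel, hf1, Real.one_rpow, mul_one, hellingerAffinity_comm] at h
    simp_rw [mul_comm (g _ ^ (1 - a))] at h
    rwa [min_eq_right ha]

theorem integral_rpow_mul_one_sub_rpow_le_exp {f g : α → ℝ}
    (hf0 : ∀ x, 0 ≤ f x) (hg0 : ∀ x, 0 ≤ g x) (hf : Integrable f ν) (hg : Integrable g ν)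
    (hf1 : ∫ x, f x ∂ν = 1) (hg1 : ∫ x, g x ∂ν = 1) {a : ℝ} (ha0 : 0 ≤ a) (ha1 : a ≤ 1) :
    ∫ x, f x ^ a * g x ^ (1 - a) ∂ν
      ≤ Real.exp (-(min a (1 - a)) * ∫ x, (√(f x) - √(g x)) ^ 2 ∂ν) := by
  have hρ0 : 0 ≤ hellingerAffinity ν f g := integral_nonneg fun x => by positivity
  have hm0 : 0 ≤ 2 * min a (1 - a) := by have := le_min ha0 (sub_nonneg.2 ha1); linarith
  calc ∫ x, f x ^ a * g x ^ (1 - a) ∂ν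
      ≤ hellingerAffinity ν f g ^ (2 * min a (1 - a)) :=
        integral_rpow_mul_one_sub_rpow_le_hellingerAffinity_rpow_min hf0 hg0 hf hg hf1 hg1 ha0 ha1
    _ ≤ Real.exp (2 * min a (1 - a) * (hellingerAffinity ν f g - 1)) :=
        Real.rpow_le_exp_mul_sub_one hρ0 hm0
    _ = Real.exp (-(min a (1 - a)) * ∫ x, (√(f x) - √(g x)) ^ 2 ∂ν) := by
        rw [integral_sqrt_sub_sqrt_sq hf0 hg0 hf hg, hf1, hg1]
        ring_nf

end HellingerAffinity

theorem renyi_hellinger_bound_general {α : Type*} [MeasurableSpace α] (ν : Measure α) (n : ℕ)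
    (f g : Fin n → α → ℝ) (a : ℝ) (ha0 : 0 < a) (ha1 : a < 1)
    (hf0 : ∀ i x, 0 ≤ f i x) (hg0 : ∀ i x, 0 ≤ g i x)
    (hfi : ∀ i, Integrable (f i) ν) (hgi : ∀ i, Integrable (g i) ν)
    (hf1 : ∀ i, ∫ x, f i x ∂ν = 1) (hg1 : ∀ i, ∫ x, g i x ∂ν = 1) :
    ∏ i, ∫ x, f i x ^ a * g i x ^ (1 - a) ∂ν
      ≤ Real.exp (-(min a (1 - a)) *
          ∑ i, ∫ x, (Real.sqrt (f i x) - Real.sqrt (g i x)) ^ 2 ∂ν) := by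
  rw [Finset.mul_sum, Real.exp_sum]
  refine Finset.prod_le_prod (fun i _ => integral_nonneg fun x =>
    mul_nonneg (Real.rpow_nonneg (hf0 i x) a) (Real.rpow_nonneg (hg0 i x) (1 - a))) fun i _ => ?_
  exact integral_rpow_mul_one_sub_rpow_le_exp (hf0 i) (hg0 i) (hfi i) (hgi i) (hf1 i) (hg1 i)
    ha0.le ha1.le

/-- Hellinger-transform bound: for densities `f i`, `g i` with respect to `ν` and
`α ∈ (0,1)`, `∏ i ∫ fᵢ^α gᵢ^{1-α} dν ≤ exp(−min(α,1−α) ∑ i h²(fᵢ,gᵢ))`, where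
`h²(f,g) = ∫ (√f − √g)² dν` is the squared Hellinger distance. -/
theorem renyi_hellinger_bound {α : Type*} [MeasurableSpace α] (ν : Measure α) (n : ℕ)
    (f g : Fin n → α → ℝ) (a : ℝ) (ha0 : 0 < a) (ha1 : a < 1)
    (hfm : ∀ i, Measurable (f i)) (hgm : ∀ i, Measurable (g i))
    (hf0 : ∀ i x, 0 ≤ f i x) (hg0 : ∀ i x, 0 ≤ g i x)
    (hfi : ∀ i, Integrable (f i) ν) (hgi : ∀ i, Integrable (g i) ν)
    (hf1 : ∀ i, ∫ x, f i x ∂ν = 1) (hg1 : ∀ i, ∫ x, g i x ∂ν = 1) :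
    ∏ i, ∫ x, f i x ^ a * g i x ^ (1 - a) ∂ν
      ≤ Real.exp (-(min a (1 - a)) *
          ∑ i, ∫ x, (Real.sqrt (f i x) - Real.sqrt (g i x)) ^ 2 ∂ν) :=
  renyi_hellinger_bound_general ν n f g a ha0 ha1 hf0 hg0 hfi hgi hf1 hg1
end

section
/- For the logistic cumulant b(η) = log(1+e^η), for every C > 0 there exists c_C > 0 such that for all |η₀| ≤ C and all u ∈ ℝ, the Bregman divergence D_b(η₀+u, η₀) = b(η₀+u) − b(η₀) − b'(η₀)u satisfies D_b(η₀+u, η₀) ≥ c_C u²/(1+|u|). -/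
/-!
Write `D(u) = b(η₀ + u) - b(η₀) - b'(η₀) u`. As soon as `b'' ≥ m` on `[η₀ - 1, η₀ + 1]`, the
function `D(u) - (m/2) u²` is convex on `[-1, 1]` with a critical point at `0`, so
`D(u) ≥ (m/2) u²` there. For the logistic cumulant `b'' = σ(1 - σ)` is continuous and positive,
hence bounded below by some `m > 0` on the compact interval `[-C - 1, C + 1]`. Since `b` is
convex, so is `D`, and `D(0) = 0` gives `D(u) ≥ |u| D(u / |u|) ≥ (m/2) |u|` for `|u| ≥ 1`.
Both bounds dominate `(m/2) u² / (1 + |u|)`.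
-/

open Set Real

lemma ConvexOn.map_smul_le_smul_map_of_map_zero {𝕜 E β : Type*} [Ring 𝕜] [PartialOrder 𝕜]
    [IsOrderedRing 𝕜] [AddCommMonoid E] [AddCommMonoid β] [PartialOrder β] [Module 𝕜 E] [Module 𝕜 β]
    {s : Set E} {g : E → β} (hg : ConvexOn 𝕜 s g) (h0 : (0 : E) ∈ s) (hg0 : g 0 = 0)
    {x : E} (hx : x ∈ s) {t : 𝕜} (ht0 : 0 ≤ t) (ht1 : t ≤ 1) : g (t • x) ≤ t • g x := by
  simpa [hg0] using hg.2 h0 hx (sub_nonneg.2 ht1) ht0 (sub_add_cancel 1 t)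

lemma IsCompact.exists_pos_le_of_continuousOn {α : Type*} [TopologicalSpace α] {K : Set α}
    {g : α → ℝ} (hK : IsCompact K) (hg : ContinuousOn g K) (hpos : ∀ x ∈ K, 0 < g x) :
    ∃ m > 0, ∀ x ∈ K, m ≤ g x := by
  rcases K.eq_empty_or_nonempty with rfl | hne
  · exact ⟨1, one_pos, by simp⟩
  obtain ⟨x₀, hx₀, hmin⟩ := hK.exists_isMinOn hne hg
  exact ⟨g x₀, hpos x₀ hx₀, fun x hx => hmin hx⟩

noncomputable def bregmanDiv (f f' : ℝ → ℝ) (η₀ u : ℝ) : ℝ :=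
  f (η₀ + u) - f η₀ - f' η₀ * u

section Bregman

variable {f f' f'' : ℝ → ℝ} {η₀ m : ℝ}

@[simp]
lemma bregmanDiv_zero : bregmanDiv f f' η₀ 0 = 0 := by
  simp [bregmanDiv]

lemma hasDerivAt_bregmanDiv_sub_sq (hf : ∀ x, HasDerivAt f (f' x) x) (u : ℝ) :
    HasDerivAt (fun v => bregmanDiv f f' η₀ v - m / 2 * v ^ 2)
      (f' (η₀ + u) - f' η₀ - m * u) u := by
  have hshift : HasDerivAt (fun v => f (η₀ + v)) (f' (η₀ + u)) u :=
    (hf (η₀ + u)).comp_const_add η₀ u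
  have hsq : HasDerivAt (fun v => m / 2 * v ^ 2) (m * u) u :=
    (hasDerivAt_pow 2 u).const_mul (m / 2) |>.congr_deriv (by norm_num; ring)
  exact ((hshift.sub_const (f η₀)).sub ((hasDerivAt_id u).const_mul (f' η₀))).sub hsq
    |>.congr_deriv (by simp)

lemma convexOn_bregmanDiv_sub_sq (hf : ∀ x, HasDerivAt f (f' x) x)
    (hf' : ∀ x, HasDerivAt f' (f'' x) x) {D : Set ℝ} (hD : Convex ℝ D)
    (hm : ∀ u ∈ interior D, m ≤ f'' (η₀ + u)) :
    ConvexOn ℝ D fun u => bregmanDiv f f' η₀ u - m / 2 * u ^ 2 := by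
  have hderiv2 (u : ℝ) :
      HasDerivAt (fun v => f' (η₀ + v) - f' η₀ - m * v) (f'' (η₀ + u) - m) u :=
    (((hf' (η₀ + u)).comp_const_add η₀ u).sub_const (f' η₀)).sub
      ((hasDerivAt_id u).const_mul m) |>.congr_deriv (by simp)
  refine convexOn_of_hasDerivWithinAt2_nonneg hD
    (fun u _ => (hasDerivAt_bregmanDiv_sub_sq hf u).continuousAt.continuousWithinAt)
    (fun u _ => (hasDerivAt_bregmanDiv_sub_sq hf u).hasDerivWithinAt)
    (fun u _ => (hderiv2 u).hasDerivWithinAt) fun u hu => ?_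
  linarith [hm u hu]

lemma mul_sq_le_bregmanDiv (hf : ∀ x, HasDerivAt f (f' x) x)
    (hf' : ∀ x, HasDerivAt f' (f'' x) x) {r : ℝ} (hr : 0 < r)
    (hm : ∀ x ∈ Icc (η₀ - r) (η₀ + r), m ≤ f'' x) {u : ℝ} (hu : |u| ≤ r) :
    m / 2 * u ^ 2 ≤ bregmanDiv f f' η₀ u := by
  have hconv := convexOn_bregmanDiv_sub_sq hf hf' (convex_Icc (-r) r) (η₀ := η₀) fun v hv => by
    rw [interior_Icc] at hv
    exact hm _ ⟨by linarith [hv.1], by linarith [hv.2]⟩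
  have hcrit : derivWithin (fun v => bregmanDiv f f' η₀ v - m / 2 * v ^ 2) (Ioi 0) 0 = 0 := by
    rw [(hasDerivAt_bregmanDiv_sub_sq hf 0).hasDerivWithinAt.derivWithin
      (uniqueDiffWithinAt_Ioi 0)]
    simp
  simpa using hconv.isMinOn_of_rightDeriv_eq_zero (by simpa [interior_Icc] using hr) hcrit
    (abs_le.1 hu)

lemma mul_abs_le_bregmanDiv (hf : ∀ x, HasDerivAt f (f' x) x)
    (hf' : ∀ x, HasDerivAt f' (f'' x) x) (hf'' : ∀ x, 0 ≤ f'' x)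
    (hm : ∀ x ∈ Icc (η₀ - 1) (η₀ + 1), m ≤ f'' x) {u : ℝ} (hu : 1 ≤ |u|) :
    m / 2 * |u| ≤ bregmanDiv f f' η₀ u := by
  have hconv : ConvexOn ℝ univ (bregmanDiv f f' η₀) := by
    simpa using convexOn_bregmanDiv_sub_sq hf hf' convex_univ (m := 0) fun u _ => hf'' _
  have habs : 0 < |u| := one_pos.trans_le hu
  have hunit : |(|u|⁻¹ * u)| = 1 := by
    rw [abs_mul, abs_inv, abs_abs, inv_mul_cancel₀ habs.ne']
  have hscale := hconv.map_smul_le_smul_map_of_map_zero (mem_univ 0) bregmanDiv_zero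
    (mem_univ u) (inv_nonneg.2 habs.le) (inv_le_one_of_one_le₀ hu)
  have hnear := mul_sq_le_bregmanDiv hf hf' one_pos hm hunit.le
  rw [← sq_abs, hunit, one_pow, mul_one] at hnear
  rw [smul_eq_mul, smul_eq_mul] at hscale
  rw [mul_comm, ← le_inv_mul_iff₀ habs]
  exact hnear.trans hscale

lemma mul_sq_div_le_bregmanDiv (hf : ∀ x, HasDerivAt f (f' x) x)
    (hf' : ∀ x, HasDerivAt f' (f'' x) x) (hf'' : ∀ x, 0 ≤ f'' x) (hm0 : 0 ≤ m)
    (hm : ∀ x ∈ Icc (η₀ - 1) (η₀ + 1), m ≤ f'' x) (u : ℝ) :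
    m / 2 * u ^ 2 / (1 + |u|) ≤ bregmanDiv f f' η₀ u := by
  rcases le_total |u| 1 with hu | hu
  · calc m / 2 * u ^ 2 / (1 + |u|) ≤ m / 2 * u ^ 2 :=
          div_le_self (by positivity) (le_add_of_nonneg_right (abs_nonneg u))
      _ ≤ bregmanDiv f f' η₀ u := mul_sq_le_bregmanDiv hf hf' one_pos hm hu
  · calc m / 2 * u ^ 2 / (1 + |u|) ≤ m / 2 * |u| := by
          rw [div_le_iff₀ (by positivity), ← sq_abs]
          nlinarith [mul_nonneg hm0 (abs_nonneg u)]
      _ ≤ bregmanDiv f f' η₀ u := mul_abs_le_bregmanDiv hf hf' hf'' hm hu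

end Bregman

lemma Real.exp_div_one_add_exp (x : ℝ) : exp x / (1 + exp x) = sigmoid x := by
  rw [sigmoid_def, exp_neg]
  field_simp
  ring

lemma Real.hasDerivAt_log_one_add_exp (x : ℝ) :
    HasDerivAt (fun y => log (1 + exp y)) (sigmoid x) x := by
  convert ((hasDerivAt_exp x).const_add 1).log (by positivity) using 1
  exact (exp_div_one_add_exp x).symm

lemma Real.sigmoid_mul_one_sub_pos (x : ℝ) : 0 < sigmoid x * (1 - sigmoid x) :=
  mul_pos (sigmoid_pos x) (sub_pos.2 (sigmoid_lt_one x))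

theorem logistic_bregman_lower_general (C : ℝ) :
    ∃ c : ℝ, 0 < c ∧
      ∀ η₀ u : ℝ, |η₀| ≤ C →
        c * u ^ 2 / (1 + |u|) ≤
          Real.log (1 + Real.exp (η₀ + u)) - Real.log (1 + Real.exp η₀)
            - Real.exp η₀ / (1 + Real.exp η₀) * u := by
  obtain ⟨m, hm, hmK⟩ :=
    (isCompact_Icc (a := -(C + 1)) (b := C + 1)).exists_pos_le_of_continuousOn
      (g := fun x => sigmoid x * (1 - sigmoid x)) (by fun_prop)
      fun x _ => sigmoid_mul_one_sub_pos x
  refine ⟨m / 2, half_pos hm, fun η₀ u hη₀ => ?_⟩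
  have hK : ∀ x ∈ Icc (η₀ - 1) (η₀ + 1), m ≤ sigmoid x * (1 - sigmoid x) := fun x hx =>
    hmK x ⟨by linarith [neg_abs_le η₀, hx.1], by linarith [le_abs_self η₀, hx.2]⟩
  simpa only [bregmanDiv, exp_div_one_add_exp] using
    mul_sq_div_le_bregmanDiv hasDerivAt_log_one_add_exp hasDerivAt_sigmoid
      (fun x => (sigmoid_mul_one_sub_pos x).le) hm.le hK u

/-- Truncated-quadratic lower bound for the logistic Bregman divergence: for
`b(η) = log(1+e^η)` and every `C > 0` there is `c_C > 0` such that for all `|η₀| ≤ C`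
and all `u`, `b(η₀+u) − b(η₀) − b'(η₀)u ≥ c_C u²/(1+|u|)`, where
`b'(η₀) = e^{η₀}/(1+e^{η₀})`. -/
theorem logistic_bregman_lower (C : ℝ) (hC : 0 < C) :
    ∃ c : ℝ, 0 < c ∧
      ∀ η₀ u : ℝ, |η₀| ≤ C →
        c * u ^ 2 / (1 + |u|) ≤
          Real.log (1 + Real.exp (η₀ + u)) - Real.log (1 + Real.exp η₀)
            - Real.exp η₀ / (1 + Real.exp η₀) * u :=
  logistic_bregman_lower_general C
end

section
/- Fix α ∈ (0,1) and a strictly convex function b: ℝ → ℝ with bounded second-derivative log-derivative |(log b'')'| ≤ 1. For every r > 0 there exist constants 0 < c_{α,r} < C_{α,r} such that for all η₀ ∈ ℝ and |u| ≤ r, the Jensen gap J_α(η₀+u, η₀) = α b(η₀+u) + (1−α) b(η₀) − b(α(η₀+u) + (1−α)η₀) satisfies c_{α,r} b''(η₀) u² ≤ J_α(η₀+u, η₀) ≤ C_{α,r} b''(η₀) u². -/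
/-!
On `|η - η₀| ≤ r` the Lipschitz bound on `log b''` pins `b''(η)` between `e^{-r} b''(η₀)` and
`e^{r} b''(η₀)`. A function whose second derivative is at least `m` on an interval is
`m`-strongly convex there, so its Jensen gap at weight `α` is at least `α(1-α)m u²/2`; applied to
`b` and to `-b` this gives `c = α(1-α)e^{-r}/2` and `C = α(1-α)e^{r}/2`.
-/

open Metric Real

def jensenGap (a : ℝ) (f : ℝ → ℝ) (x y : ℝ) : ℝ :=
  a * f x + (1 - a) * f y - f (a * x + (1 - a) * y)

lemma jensenGap_neg (a : ℝ) (f : ℝ → ℝ) (x y : ℝ) :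
    jensenGap a (fun t => -f t) x y = -jensenGap a f x y := by
  unfold jensenGap
  ring

lemma StrongConvexOn.mul_sq_le_jensenGap {s : Set ℝ} {m : ℝ} {f : ℝ → ℝ}
    (hf : StrongConvexOn s m f) {x y : ℝ} (hx : x ∈ s) (hy : y ∈ s) {a : ℝ} (ha0 : 0 ≤ a)
    (ha1 : a ≤ 1) : a * (1 - a) / 2 * m * (x - y) ^ 2 ≤ jensenGap a f x y := by
  have h := hf.2 hx hy ha0 (sub_nonneg.2 ha1) (add_sub_cancel a 1)
  simp only [smul_eq_mul, Real.norm_eq_abs, sq_abs] at h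
  unfold jensenGap
  linarith

lemma strongConvexOn_of_hasDerivAt2_ge {s : Set ℝ} (hs : Convex ℝ s) {f f' f'' : ℝ → ℝ} {m : ℝ}
    (hf : ∀ x ∈ s, HasDerivAt f (f' x) x) (hf' : ∀ x ∈ s, HasDerivAt f' (f'' x) x)
    (hm : ∀ x ∈ s, m ≤ f'' x) : StrongConvexOn s m f := by
  rw [strongConvexOn_iff_convex]
  simp only [Real.norm_eq_abs, sq_abs]
  have hsq : ∀ x, HasDerivAt (fun x => m / 2 * x ^ 2) (m * x) x := fun x =>
    ((hasDerivAt_pow 2 x).const_mul (m / 2)).congr_deriv (by norm_num; ring)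
  have hlin : ∀ x, HasDerivAt (fun x => m * x) m x := fun x => by
    simpa using (hasDerivAt_id x).const_mul m
  refine convexOn_of_hasDerivWithinAt2_nonneg (f' := fun x => f' x - m * x)
    (f'' := fun x => f'' x - m) hs ?_ ?_ ?_ ?_
  · exact fun x hx => ((hf x hx).sub (hsq x)).continuousAt.continuousWithinAt
  · exact fun x hx => ((hf x (interior_subset hx)).sub (hsq x)).hasDerivWithinAt
  · exact fun x hx => ((hf' x (interior_subset hx)).sub (hlin x)).hasDerivWithinAt
  · exact fun x hx => sub_nonneg.2 (hm x (interior_subset hx))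

lemma jensenGap_mem_Icc_of_hasDerivAt2 {s : Set ℝ} (hs : Convex ℝ s) {f f' f'' : ℝ → ℝ}
    {m M : ℝ} (hf : ∀ x ∈ s, HasDerivAt f (f' x) x) (hf' : ∀ x ∈ s, HasDerivAt f' (f'' x) x)
    (hm : ∀ x ∈ s, m ≤ f'' x) (hM : ∀ x ∈ s, f'' x ≤ M) {x y : ℝ} (hx : x ∈ s) (hy : y ∈ s)
    {a : ℝ} (ha0 : 0 ≤ a) (ha1 : a ≤ 1) :
    jensenGap a f x y ∈ Set.Icc (a * (1 - a) / 2 * m * (x - y) ^ 2)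
      (a * (1 - a) / 2 * M * (x - y) ^ 2) := by
  have hlower := (strongConvexOn_of_hasDerivAt2_ge hs hf hf' hm).mul_sq_le_jensenGap hx hy ha0 ha1
  have hupper := (strongConvexOn_of_hasDerivAt2_ge (f := fun t => -f t) (m := -M) hs
    (fun x hx => (hf x hx).neg) (fun x hx => (hf' x hx).neg)
    (fun x hx => neg_le_neg (hM x hx))).mul_sq_le_jensenGap hx hy ha0 ha1
  rw [jensenGap_neg] at hupper
  exact ⟨hlower, by linarith⟩

lemma le_exp_mul_dist_mul_of_lipschitzWith_log {X : Type*} [PseudoMetricSpace X] {f : X → ℝ}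
    {K : NNReal} (hf : LipschitzWith K fun x => log (f x)) {x y : X} (hx : 0 < f x)
    (hy : 0 < f y) : f x ≤ exp (K * dist x y) * f y := by
  have hlog : log (f x) - log (f y) ≤ K * dist x y :=
    (le_abs_self _).trans (by simpa only [Real.dist_eq] using hf.dist_le_mul x y)
  calc f x = exp (log (f x)) := (exp_log hx).symm
    _ ≤ exp (K * dist x y + log (f y)) := exp_le_exp.2 (by linarith)
    _ = exp (K * dist x y) * f y := by rw [exp_add, exp_log hy]

/-- Two-sided quadratic comparison for the Jensen gap of a strictly convex cumulant:
fix `α ∈ (0,1)` and `b` twice differentiable with second derivative `b'' > 0` whose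
logarithm has derivative bounded by 1 (encoded as `log ∘ b''` being 1-Lipschitz).
Then for every `r > 0` there are `0 < c < C` (depending only on `α` and `r`) such that
for all `η₀` and `|u| ≤ r`,
`c b''(η₀) u² ≤ α b(η₀+u) + (1−α) b(η₀) − b(α(η₀+u)+(1−α)η₀) ≤ C b''(η₀) u²`. -/
theorem jensen_gap_quadratic (a : ℝ) (ha0 : 0 < a) (ha1 : a < 1)
    (b b1 b2 : ℝ → ℝ)
    (hb1 : ∀ η, HasDerivAt b (b1 η) η)
    (hb2 : ∀ η, HasDerivAt b1 (b2 η) η)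
    (hpos : ∀ η, 0 < b2 η)
    (hlip : LipschitzWith 1 fun η => Real.log (b2 η)) :
    ∀ r : ℝ, 0 < r → ∃ c C : ℝ, 0 < c ∧ c < C ∧
      ∀ η₀ u : ℝ, |u| ≤ r →
        c * b2 η₀ * u ^ 2 ≤
            a * b (η₀ + u) + (1 - a) * b η₀ - b (a * (η₀ + u) + (1 - a) * η₀) ∧
          a * b (η₀ + u) + (1 - a) * b η₀ - b (a * (η₀ + u) + (1 - a) * η₀)
            ≤ C * b2 η₀ * u ^ 2 := by
  intro r hr
  have hweight : 0 < a * (1 - a) / 2 := by nlinarith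
  refine ⟨a * (1 - a) / 2 * exp (-r), a * (1 - a) / 2 * exp r, by positivity,
    mul_lt_mul_of_pos_left (exp_lt_exp.2 (by linarith)) hweight, fun η₀ u hu => ?_⟩
  have hdist : ∀ z ∈ closedBall η₀ r, exp (dist z η₀) ≤ exp r := fun z hz => exp_le_exp.2 hz
  have hlower : ∀ z ∈ closedBall η₀ r, exp (-r) * b2 η₀ ≤ b2 z := fun z hz => by
    have h := le_exp_mul_dist_mul_of_lipschitzWith_log hlip (hpos η₀) (hpos z)
    rw [NNReal.coe_one, one_mul, dist_comm] at h
    rw [exp_neg, inv_mul_le_iff₀ (exp_pos r)]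
    exact h.trans (mul_le_mul_of_nonneg_right (hdist z hz) (hpos z).le)
  have hupper : ∀ z ∈ closedBall η₀ r, b2 z ≤ exp r * b2 η₀ := fun z hz => by
    have h := le_exp_mul_dist_mul_of_lipschitzWith_log hlip (hpos z) (hpos η₀)
    rw [NNReal.coe_one, one_mul] at h
    exact h.trans (mul_le_mul_of_nonneg_right (hdist z hz) (hpos η₀).le)
  have hu_mem : η₀ + u ∈ closedBall η₀ r := by simpa [Real.dist_eq] using hu
  have hgap := jensenGap_mem_Icc_of_hasDerivAt2 (convex_closedBall η₀ r) (fun x _ => hb1 x)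
    (fun x _ => hb2 x) hlower hupper hu_mem (mem_closedBall_self hr.le) ha0.le ha1.le
  rw [add_sub_cancel_left, ← mul_assoc, ← mul_assoc] at hgap
  exact hgap
end
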